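/- arXiv:1805.05693 — 4 statements merged into one kernel-verified Lean document; each statement's English description precedes it below -/
import Mathlib

section
/- Consider the cubic Duffing oscillator Hamiltonian H(q,p) = p² − a₄q⁴ − a₂q². Define the doubling map q' = (p² − 2a₄q⁴ − a₂q²)/(2√a₄·q·p), p' = (q⁴(2a₄q² + a₂)² − (4a₄q⁴ + p²)p²)/(4√a₄·q²p²), for q ≠ 0, p ≠ 0, a₄ > 0. Then H(q', p') = H(q, p). -/
/-- The doubling map of the cubic Duffing oscillator preserves the Hamiltonian
`H(q,p) = p² − a₄q⁴ − a₂q²`. -/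
theorem duffing_doubling_preserves_H
    (a₂ a₄ q p q' p' : ℝ) (ha : 0 < a₄) (hq : q ≠ 0) (hp : p ≠ 0)
    (H : ℝ → ℝ → ℝ)
    (hH : ∀ x y, H x y = y ^ 2 - a₄ * x ^ 4 - a₂ * x ^ 2)
    (hq' : q' = (p ^ 2 - 2 * a₄ * q ^ 4 - a₂ * q ^ 2) / (2 * Real.sqrt a₄ * q * p))
    (hp' : p' = (q ^ 4 * (2 * a₄ * q ^ 2 + a₂) ^ 2 - (4 * a₄ * q ^ 4 + p ^ 2) * p ^ 2)
        / (4 * Real.sqrt a₄ * q ^ 2 * p ^ 2)) :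
    H q' p' = H q p := by
  obtain ⟨s, hs0, rfl⟩ : ∃ s, 0 < s ∧ s ^ 2 = a₄ :=
    ⟨Real.sqrt a₄, Real.sqrt_pos.mpr ha, Real.sq_sqrt ha.le⟩
  rw [Real.sqrt_sq hs0.le] at hq' hp'
  rw [hH, hH, hq', hp']
  have hs : s ≠ 0 := hs0.ne'
  field_simp
  ring
end

section
/- With the doubling map of the cubic Duffing oscillator (q,p) ↦ (q',p') defined by q' = (p² − 2a₄q⁴ − a₂q²)/(2√a₄ q p), p' = (q⁴(2a₄q² + a₂)² − (4a₄q⁴ + p²)p²)/(4√a₄ q²p²), the Jacobian determinant ∂(q',p')/∂(q,p) equals 2 wherever the map is defined; equivalently, if {q,p} = 1 then {q',p'} = 2. -/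
/-!
Write `s` for `√a₄`. For any `s ≠ 0` the quotient rule turns the Jacobian of the doubling map
into a rational function of `q, p, s`, which simplifies to `2 a₄ / s²`; the square root enters
only through `s² = a₄`.
-/

theorem HasFDerivAt.fun_div {𝕜 E : Type*} [NontriviallyNormedField 𝕜] [NormedAddCommGroup E]
    [NormedSpace 𝕜 E] {f g : E → 𝕜} {f' g' : E →L[𝕜] 𝕜} {x : E} (hf : HasFDerivAt f f' x)
    (hg : HasFDerivAt g g' x) (hx : g x ≠ 0) :
    HasFDerivAt (fun y => f y / g y) ((g x)⁻¹ • f' - (f x / g x ^ 2) • g') x := by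
  have hinv := (hasFDerivAt_inv hx).comp x hg
  simp only [div_eq_mul_inv]
  refine (hf.mul hinv).congr_fderiv ?_
  ext v
  simp only [Function.comp_apply, add_apply, sub_apply, smul_apply, smul_eq_mul, mul_neg,
    ContinuousLinearMap.comp_apply, ContinuousLinearMap.toSpanSingleton_apply]
  ring

theorem LinearMap.det_prod_eq_mul_sub_mul {R : Type*} [CommRing R] (f g : R × R →ₗ[R] R) :
    LinearMap.det (f.prod g) = f (1, 0) * g (0, 1) - f (0, 1) * g (1, 0) := by
  rw [← LinearMap.det_toMatrix (Module.Basis.finTwoProd R), Matrix.det_fin_two]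
  simp [LinearMap.toMatrix_apply]

noncomputable def duffingDoubling (a₂ a₄ s : ℝ) (z : ℝ × ℝ) : ℝ × ℝ :=
  ((z.2 ^ 2 - 2 * a₄ * z.1 ^ 4 - a₂ * z.1 ^ 2) / (2 * s * z.1 * z.2),
   (z.1 ^ 4 * (2 * a₄ * z.1 ^ 2 + a₂) ^ 2 - (4 * a₄ * z.1 ^ 4 + z.2 ^ 2) * z.2 ^ 2)
     / (4 * s * z.1 ^ 2 * z.2 ^ 2))

theorem det_fderiv_duffingDoubling {a₂ a₄ s q p : ℝ} (hs : s ≠ 0) (hq : q ≠ 0) (hp : p ≠ 0) :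
    LinearMap.det (fderiv ℝ (duffingDoubling a₂ a₄ s) (q, p)).toLinearMap = 2 * a₄ / s ^ 2 := by
  have hfst : HasFDerivAt (fun z : ℝ × ℝ => z.1) (ContinuousLinearMap.fst ℝ ℝ ℝ) (q, p) :=
    hasFDerivAt_fst
  have hsnd : HasFDerivAt (fun z : ℝ × ℝ => z.2) (ContinuousLinearMap.snd ℝ ℝ ℝ) (q, p) :=
    hasFDerivAt_snd
  have hX := HasFDerivAt.fun_div
    (((hsnd.pow 2).fun_sub ((hfst.pow 4).const_mul (2 * a₄))).fun_sub ((hfst.pow 2).const_mul a₂))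
    ((hfst.const_mul (2 * s)).fun_mul hsnd) (by simp [hs, hq, hp])
  have hY := HasFDerivAt.fun_div
    (((hfst.pow 4).fun_mul ((((hfst.pow 2).const_mul (2 * a₄)).add_const a₂).pow 2)).fun_sub
      ((((hfst.pow 4).const_mul (4 * a₄)).fun_add (hsnd.pow 2)).fun_mul (hsnd.pow 2)))
    (((hfst.pow 2).const_mul (4 * s)).fun_mul (hsnd.pow 2)) (by simp [hs, hq, hp])
  have hD : HasFDerivAt (duffingDoubling a₂ a₄ s) _ (q, p) := hX.prodMk hY
  rw [hD.fderiv, ContinuousLinearMap.coe_prod, LinearMap.det_prod_eq_mul_sub_mul]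
  simp only [mul_inv_rev, Nat.add_one_sub_one, pow_one, nsmul_eq_mul, Nat.cast_ofNat, smul_add,
    ContinuousLinearMap.toLinearMap_sub, ContinuousLinearMap.toLinearMap_smul,
    ContinuousLinearMap.coe_snd, ContinuousLinearMap.coe_fst, ContinuousLinearMap.toLinearMap_add,
    LinearMap.sub_apply, LinearMap.smul_apply, LinearMap.snd_apply, LinearMap.fst_apply,
    LinearMap.add_apply, smul_eq_mul, mul_zero, mul_one, zero_sub, zero_add, add_zero, neg_add_rev,
    sub_zero]
  field_simp
  ring

/-- The doubling map of the cubic Duffing oscillator is a canonical transformation of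
valence 2: its Jacobian determinant equals 2 wherever it is defined. -/
theorem duffing_doubling_jacobian
    (a₂ a₄ : ℝ) (ha : 0 < a₄)
    (F : ℝ × ℝ → ℝ × ℝ)
    (hF : ∀ z : ℝ × ℝ,
      F z = ((z.2 ^ 2 - 2 * a₄ * z.1 ^ 4 - a₂ * z.1 ^ 2)
                / (2 * Real.sqrt a₄ * z.1 * z.2),
             (z.1 ^ 4 * (2 * a₄ * z.1 ^ 2 + a₂) ^ 2
                - (4 * a₄ * z.1 ^ 4 + z.2 ^ 2) * z.2 ^ 2)
                / (4 * Real.sqrt a₄ * z.1 ^ 2 * z.2 ^ 2)))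
    (q p : ℝ) (hq : q ≠ 0) (hp : p ≠ 0) :
    LinearMap.det ((fderiv ℝ F (q, p)).toLinearMap) = 2 := by
  have hsqrt : Real.sqrt a₄ ≠ 0 := (Real.sqrt_pos.mpr ha).ne'
  rw [show F = duffingDoubling a₂ a₄ (Real.sqrt a₄) from funext hF,
    det_fderiv_duffingDoubling hsqrt hq hp, Real.sq_sqrt ha.le]
  field_simp
end

section
/- Let f(x) = a₄x⁴ + a₃x³ + a₂x² + a₁x + a₀ with a₄ ≠ 0, and let (x₁,y₁), (x₂,y₂) lie on y² = f(x) with x₁ ≠ x₂. Define x₃,₄ = −x₁/2 − x₂/2 − a₃/(2a₄) ± √α/(2a₄), where α = 4a₄(((y₁−y₂)/(x₁−x₂))² − a₂) + a₃² − 2a₄a₃(x₁+x₂) − a₄²(3x₁² + 2x₁x₂ + 3x₂²). Then y₃ = −P(x₃) and y₄ = −P(x₄), where P is the line through (x₁,y₁),(x₂,y₂), satisfy y₃² = f(x₃) and y₄² = f(x₄), i.e. the new points lie on the curve. -/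
lemma quartic_aux (a₀ a₁ a₂ a₃ a₄ x₁ y₁ x₂ y₂ β x y : ℂ)
    (ha : a₄ ≠ 0) (hd : x₁ - x₂ ≠ 0)
    (h₁ : y₁ ^ 2 = a₄ * x₁ ^ 4 + a₃ * x₁ ^ 3 + a₂ * x₁ ^ 2 + a₁ * x₁ + a₀)
    (h₂ : y₂ ^ 2 = a₄ * x₂ ^ 4 + a₃ * x₂ ^ 3 + a₂ * x₂ ^ 2 + a₁ * x₂ + a₀)
    (hβ : β ^ 2 = 4 * a₄ * (((y₁ - y₂) / (x₁ - x₂)) ^ 2 - a₂) + a₃ ^ 2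
        - 2 * a₄ * a₃ * (x₁ + x₂) - a₄ ^ 2 * (3 * x₁ ^ 2 + 2 * x₁ * x₂ + 3 * x₂ ^ 2))
    (hxn : x = -x₁ / 2 - x₂ / 2 - a₃ / (2 * a₄) + β / (2 * a₄))
    (hy : y = -((x - x₂) / (x₁ - x₂) * y₁ + (x - x₁) / (x₂ - x₁) * y₂)) :
    y ^ 2 = a₄ * x ^ 4 + a₃ * x ^ 3 + a₂ * x ^ 2 + a₁ * x + a₀ := by
  have hm : (y₁ - y₂) / (x₁ - x₂) * (x₁ - x₂) = y₁ - y₂ := div_mul_cancel₀ _ hd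
  -- β² cleared of denominators
  have hβm : β ^ 2 * (x₁ - x₂) ^ 2 = 4 * a₄ * ((y₁ - y₂) ^ 2 - a₂ * (x₁ - x₂) ^ 2)
      + (a₃ ^ 2 - 2 * a₄ * a₃ * (x₁ + x₂)
        - a₄ ^ 2 * (3 * x₁ ^ 2 + 2 * x₁ * x₂ + 3 * x₂ ^ 2)) * (x₁ - x₂) ^ 2 := by
    rw [hβ]; field_simp; ring
  have hxm : 2 * a₄ * x = -a₄ * x₁ - a₄ * x₂ - a₃ + β := by
    rw [hxn]; field_simp
  -- the quadratic factor vanishes at x (times 4a₄ and (x₁-x₂)²)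
  have hQ4 : 4 * a₄ * ((x₁ - x₂) ^ 2 * (a₄ * x ^ 2 + (a₃ + a₄ * (x₁ + x₂)) * x
      + a₂ + a₃ * (x₁ + x₂) + a₄ * (x₁ + x₂) ^ 2 - a₄ * x₁ * x₂) - (y₁ - y₂) ^ 2) = 0 := by
    linear_combination hβm
      + ((2 * a₄ * x + a₄ * (x₁ + x₂) + a₃ + β) * (x₁ - x₂) ^ 2) * hxm
  have hQm : (x₁ - x₂) ^ 2 * (a₄ * x ^ 2 + (a₃ + a₄ * (x₁ + x₂)) * x
      + a₂ + a₃ * (x₁ + x₂) + a₄ * (x₁ + x₂) ^ 2 - a₄ * x₁ * x₂) - (y₁ - y₂) ^ 2 = 0 := by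
    have h4 : (4 : ℂ) * a₄ ≠ 0 := mul_ne_zero (by norm_num) ha
    exact (mul_eq_zero.mp hQ4).resolve_left h4
  have hy' : y * (x₁ - x₂) = -((x - x₂) * y₁ - (x - x₁) * y₂) := by
    have hd2 : x₂ - x₁ ≠ 0 := by rw [sub_ne_zero] at hd ⊢; exact hd.symm
    rw [hy]; field_simp; ring
  have key : (x₁ - x₂) ^ 2 * y ^ 2
      = (x₁ - x₂) ^ 2 * (a₄ * x ^ 4 + a₃ * x ^ 3 + a₂ * x ^ 2 + a₁ * x + a₀) := by
    linear_combination (y * (x₁ - x₂) - ((x - x₂) * y₁ - (x - x₁) * y₂)) * hy'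
      + ((x - x₂) ^ 2 - (x - x₁) * (x - x₂)) * h₁
      + ((x - x₁) ^ 2 - (x - x₁) * (x - x₂)) * h₂
      - (x - x₁) * (x - x₂) * hQm
  exact mul_left_cancel₀ (pow_ne_zero 2 hd) key

/-- The 4-point map from intersecting the quartic curve `y² = f(x)` with the secant line
through `(x₁,y₁)`, `(x₂,y₂)`: the two new points `(x₃,y₃)`, `(x₄,y₄)` with
`x₃,₄ = −x₁/2 − x₂/2 − a₃/(2a₄) ± √α/(2a₄)` and `y₃,₄ = −P(x₃,₄)` lie on the curve. -/
theorem line_intersection_points_on_curve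
    (a₀ a₁ a₂ a₃ a₄ x₁ y₁ x₂ y₂ x₃ y₃ x₄ y₄ α β : ℂ)
    (f P : ℂ → ℂ)
    (hf : ∀ x, f x = a₄ * x ^ 4 + a₃ * x ^ 3 + a₂ * x ^ 2 + a₁ * x + a₀)
    (ha : a₄ ≠ 0)
    (h₁ : y₁ ^ 2 = f x₁) (h₂ : y₂ ^ 2 = f x₂) (hx : x₁ ≠ x₂)
    (hP : ∀ x, P x = (x - x₂) / (x₁ - x₂) * y₁ + (x - x₁) / (x₂ - x₁) * y₂)
    (hα : α = 4 * a₄ * (((y₁ - y₂) / (x₁ - x₂)) ^ 2 - a₂) + a₃ ^ 2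
        - 2 * a₄ * a₃ * (x₁ + x₂) - a₄ ^ 2 * (3 * x₁ ^ 2 + 2 * x₁ * x₂ + 3 * x₂ ^ 2))
    (hβ : β ^ 2 = α)
    (hx₃ : x₃ = -x₁ / 2 - x₂ / 2 - a₃ / (2 * a₄) + β / (2 * a₄))
    (hx₄ : x₄ = -x₁ / 2 - x₂ / 2 - a₃ / (2 * a₄) - β / (2 * a₄))
    (hy₃ : y₃ = -P x₃) (hy₄ : y₄ = -P x₄) :
    y₃ ^ 2 = f x₃ ∧ y₄ ^ 2 = f x₄ := by
  have hd : x₁ - x₂ ≠ 0 := sub_ne_zero.mpr hx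
  rw [hα] at hβ
  rw [hf x₁] at h₁
  rw [hf x₂] at h₂
  constructor
  · rw [hf x₃]
    exact quartic_aux a₀ a₁ a₂ a₃ a₄ x₁ y₁ x₂ y₂ β x₃ y₃ ha hd h₁ h₂ hβ hx₃
      (by rw [hy₃, hP x₃])
  · rw [hf x₄]
    refine quartic_aux a₀ a₁ a₂ a₃ a₄ x₁ y₁ x₂ y₂ (-β) x₄ y₄ ha hd h₁ h₂
      (by rw [neg_pow]; simpa using hβ) (by rw [hx₄]; ring) (by rw [hy₄, hP x₄])
end

section
/- Let f(x) = a₄x⁴ + a₂x² + a₀ with a₄ > 0 (biquadratic case, a₃ = a₁ = 0), and let (q,p) satisfy p² = f(q) with qp ≠ 0. Then the point (q', p') given by the doubling map q' = (p² − 2a₄q⁴ − a₂q²)/(2√a₄ qp), p' = (q⁴(2a₄q² + a₂)² − (4a₄q⁴ + p²)p²)/(4√a₄ q²p²), satisfies p'² = f(q'), i.e. the doubled point lies on the same level curve. -/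
/-- Biquadratic case: the doubling map of the cubic Duffing oscillator maps points of
the level curve `p² = a₄q⁴ + a₂q² + a₀` to points of the same level curve. -/
theorem duffing_doubling_stays_on_curve
    (a₀ a₂ a₄ q p q' p' : ℝ) (ha : 0 < a₄) (hq : q ≠ 0) (hp : p ≠ 0)
    (f : ℝ → ℝ)
    (hf : ∀ x, f x = a₄ * x ^ 4 + a₂ * x ^ 2 + a₀)
    (hon : p ^ 2 = f q)
    (hq' : q' = (p ^ 2 - 2 * a₄ * q ^ 4 - a₂ * q ^ 2) / (2 * Real.sqrt a₄ * q * p))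
    (hp' : p' = (q ^ 4 * (2 * a₄ * q ^ 2 + a₂) ^ 2 - (4 * a₄ * q ^ 4 + p ^ 2) * p ^ 2)
        / (4 * Real.sqrt a₄ * q ^ 2 * p ^ 2)) :
    p' ^ 2 = f q' := by
  rw [hf] at hon
  have h0 : a₀ = p ^ 2 - a₄ * q ^ 4 - a₂ * q ^ 2 := by linarith
  subst h0 hq' hp'
  rw [hf]
  set s := Real.sqrt a₄ with hsdef
  have hs : s ≠ 0 := by positivity
  have hA : a₄ = s ^ 2 := (Real.sq_sqrt ha.le).symm
  rw [hA]
  field_simp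
  ring
end
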